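/- arXiv:2508.03192 — 5 statements merged into one kernel-verified Lean document; each statement's English description precedes it below -/
import Mathlib

section
/- Let ρ, A, B be n×n complex matrices with B Hermitian (Bᴴ = B). Then tr(ρ·[A,B]) = −i · ( 4·tr( ((I + i·Bᴴ)/2) · ρ · ((I − i·B)/2) · A ) − tr(ρ·A) − tr(Bᴴ·ρ·B·A) ). -/
/-!
Expanding `(1 + iB) ρ (1 - iB) = ρ + BρB + i[B, ρ]` isolates the commutator `[B, ρ]`, and
cyclicity of the trace turns `tr(ρ[A, B])` into `tr([B, ρ] A)`.
-/

open Matrix Complex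

theorem Matrix.trace_mul_commutator {m R : Type*} [Fintype m] [CommRing R]
    (ρ A B : Matrix m m R) : trace (ρ * (A * B - B * A)) = trace ((B * ρ - ρ * B) * A) := by
  rw [mul_sub, sub_mul, trace_sub, trace_sub, ← mul_assoc, trace_mul_cycle, mul_assoc,
    mul_assoc]

theorem one_add_I_smul_mul_mul_one_sub_I_smul {R : Type*} [Ring R] [Algebra ℂ R] (ρ B : R) :
    (1 + I • B) * ρ * (1 - I • B) = ρ + B * ρ * B + I • (B * ρ - ρ * B) := by
  simp only [add_mul, mul_sub, smul_mul_assoc, mul_smul_comm, one_mul, mul_one]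
  linear_combination (norm := module) -(I_mul_I • (B * ρ * B))

theorem commutator_reformulation_general {n : ℕ}
    (ρ A B : Matrix (Fin n) (Fin n) ℂ) (hB : Bᴴ = B) :
    Matrix.trace (ρ * (A * B - B * A)) =
      (-Complex.I) *
        (4 * Matrix.trace
            (((1 / 2 : ℂ) • ((1 : Matrix (Fin n) (Fin n) ℂ) + Complex.I • Bᴴ)) * ρ *
              ((1 / 2 : ℂ) • ((1 : Matrix (Fin n) (Fin n) ℂ) - Complex.I • B)) * A)
          - Matrix.trace (ρ * A)
          - Matrix.trace (Bᴴ * ρ * B * A)) := by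
  simp only [hB, smul_mul_assoc, mul_smul_comm, trace_smul, smul_eq_mul]
  rw [one_add_I_smul_mul_mul_one_sub_I_smul, add_mul, add_mul, smul_mul_assoc, trace_add,
    trace_add, trace_smul, smul_eq_mul, trace_mul_commutator]
  linear_combination (trace ((B * ρ - ρ * B) * A)) * I_mul_I

/-- For n×n complex matrices ρ, A, B with B Hermitian,
tr(ρ·[A,B]) = −i·( 4·tr( ((I + i·Bᴴ)/2) · ρ · ((I − i·B)/2) · A ) − tr(ρ·A) − tr(Bᴴ·ρ·B·A) ). -/
theorem commutator_reformulation {n : ℕ} (hn : 1 ≤ n)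
    (ρ A B : Matrix (Fin n) (Fin n) ℂ) (hB : Bᴴ = B) :
    Matrix.trace (ρ * (A * B - B * A)) =
      (-Complex.I) *
        (4 * Matrix.trace
            (((1 / 2 : ℂ) • ((1 : Matrix (Fin n) (Fin n) ℂ) + Complex.I • Bᴴ)) * ρ *
              ((1 / 2 : ℂ) • ((1 : Matrix (Fin n) (Fin n) ℂ) - Complex.I • B)) * A)
          - Matrix.trace (ρ * A)
          - Matrix.trace (Bᴴ * ρ * B * A)) :=
  commutator_reformulation_general ρ A B hB
end

section
/- Let ρ, A, B, H be n×n complex matrices with B Hermitian and B·B = I, and let t be a real number. Set A(t) := exp(i·t·H)·A·exp(−i·t·H), c₊ := tr( ((I + B)/2) · ρ · ((I + B)/2) ), and assume c₊ ≠ 0. Define ρ₊ := c₊⁻¹ · exp(−i·t·H) · ((I + B)/2) · ρ · ((I + B)/2) · exp(i·t·H). Then tr(ρ·{A(t),B}) = 4·c₊·tr(ρ₊·A) − tr( exp(−i·t·H)·ρ·exp(i·t·H)·A ) − tr( exp(−i·t·H)·B·ρ·B·exp(i·t·H)·A ). -/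
/-!
By `(1 + B) ρ (1 + B) = ρ + {B, ρ} + B ρ B` and cyclicity of the trace, the anticommutator term is
`tr((1 + B) ρ (1 + B) A(t)) - tr(ρ A(t)) - tr(B ρ B A(t))`, with the two exponentials of `A(t)` moved
around `ρ`. Finally `((I + B)/2) ρ ((I + B)/2)` is a quarter of the sandwich, so the factor `4 c₊` in
front of `tr(ρ₊ A)` exactly cancels the normalisation of `ρ₊`.
-/

open Matrix Complex NormedSpace

variable {m R : Type*} [Fintype m]

theorem mul_add_mul_eq_one_add_mul_mul_one_add_sub {α : Type*} [Ring α] (b r : α) :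
    b * r + r * b = (1 + b) * r * (1 + b) - r - b * r * b := by
  noncomm_ring

theorem Matrix.trace_mul_anticommutator [CommRing R] (ρ X B : Matrix m m R) :
    trace (ρ * (X * B + B * X)) = trace ((B * ρ + ρ * B) * X) := by
  rw [mul_add, add_mul, trace_add, trace_add, ← Matrix.mul_assoc, trace_mul_comm,
    ← Matrix.mul_assoc, ← Matrix.mul_assoc]

theorem Matrix.trace_anticommutator_mul_conj [DecidableEq m] [CommRing R]
    (ρ A B U V : Matrix m m R) :
    trace ((B * ρ + ρ * B) * (U * A * V)) =
      trace (V * (1 + B) * ρ * (1 + B) * U * A) - trace (V * ρ * U * A)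
        - trace (V * B * ρ * B * U * A) := by
  rw [← Matrix.mul_assoc, trace_mul_comm, mul_add_mul_eq_one_add_mul_mul_one_add_sub,
    ← trace_sub, ← trace_sub]
  congr 1
  noncomm_ring

theorem Matrix.mul_trace_inv_smul_conj_half_sandwich {K : Type*} [Field K] (h2 : (2 : K) ≠ 0)
    {c : K} (hc : c ≠ 0) (ρ A X U V : Matrix m m K) :
    4 * c * trace (c⁻¹ • (V * ((1 / 2 : K) • X) * ρ * ((1 / 2 : K) • X) * U) * A) =
      trace (V * X * ρ * X * U * A) := by
  simp only [Matrix.mul_smul, Matrix.smul_mul, smul_smul, trace_smul, smul_eq_mul]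
  field_simp
  ring

theorem anticommutator_plus_representation_general {n : ℕ}
    (ρ A B H : Matrix (Fin n) (Fin n) ℂ) (t : ℝ)
    (At : Matrix (Fin n) (Fin n) ℂ)
    (hAt : At = NormedSpace.exp ((Complex.I * (t : ℂ)) • H) * A * NormedSpace.exp ((-(Complex.I * (t : ℂ))) • H))
    (c : ℂ)
    (hc0 : c ≠ 0)
    (ρplus : Matrix (Fin n) (Fin n) ℂ)
    (hρplus : ρplus = c⁻¹ •
        (NormedSpace.exp ((-(Complex.I * (t : ℂ))) • H) *
          ((1 / 2 : ℂ) • ((1 : Matrix (Fin n) (Fin n) ℂ) + B)) * ρ *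
          ((1 / 2 : ℂ) • ((1 : Matrix (Fin n) (Fin n) ℂ) + B)) *
          NormedSpace.exp ((Complex.I * (t : ℂ)) • H))) :
    Matrix.trace (ρ * (At * B + B * At)) =
      4 * c * Matrix.trace (ρplus * A)
        - Matrix.trace
            (NormedSpace.exp ((-(Complex.I * (t : ℂ))) • H) * ρ * NormedSpace.exp ((Complex.I * (t : ℂ)) • H) * A)
        - Matrix.trace
            (NormedSpace.exp ((-(Complex.I * (t : ℂ))) • H) * B * ρ * B *
              NormedSpace.exp ((Complex.I * (t : ℂ)) • H) * A) := by
  rw [hAt, hρplus, trace_mul_anticommutator, trace_anticommutator_mul_conj,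
    mul_trace_inv_smul_conj_half_sandwich two_ne_zero hc0]

/-- Plus representation of the anti-commutator correlation function with
uncontrolled time evolution: with c₊ = tr(((I+B)/2)·ρ·((I+B)/2)) ≠ 0 and
ρ₊ = c₊⁻¹ · e^{−iHt}·((I+B)/2)·ρ·((I+B)/2)·e^{iHt}, one has
tr(ρ·{A(t),B}) = 4·c₊·tr(ρ₊·A) − tr(e^{−iHt}·ρ·e^{iHt}·A) − tr(e^{−iHt}·B·ρ·B·e^{iHt}·A). -/
theorem anticommutator_plus_representation {n : ℕ} (hn : 1 ≤ n)
    (ρ A B H : Matrix (Fin n) (Fin n) ℂ) (hB : Bᴴ = B) (hB2 : B * B = 1) (t : ℝ)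
    (At : Matrix (Fin n) (Fin n) ℂ)
    (hAt : At = NormedSpace.exp ((Complex.I * (t : ℂ)) • H) * A * NormedSpace.exp ((-(Complex.I * (t : ℂ))) • H))
    (c : ℂ)
    (hc : c = Matrix.trace
        (((1 / 2 : ℂ) • ((1 : Matrix (Fin n) (Fin n) ℂ) + B)) * ρ *
          ((1 / 2 : ℂ) • ((1 : Matrix (Fin n) (Fin n) ℂ) + B))))
    (hc0 : c ≠ 0)
    (ρplus : Matrix (Fin n) (Fin n) ℂ)
    (hρplus : ρplus = c⁻¹ •
        (NormedSpace.exp ((-(Complex.I * (t : ℂ))) • H) *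
          ((1 / 2 : ℂ) • ((1 : Matrix (Fin n) (Fin n) ℂ) + B)) * ρ *
          ((1 / 2 : ℂ) • ((1 : Matrix (Fin n) (Fin n) ℂ) + B)) *
          NormedSpace.exp ((Complex.I * (t : ℂ)) • H))) :
    Matrix.trace (ρ * (At * B + B * At)) =
      4 * c * Matrix.trace (ρplus * A)
        - Matrix.trace
            (NormedSpace.exp ((-(Complex.I * (t : ℂ))) • H) * ρ * NormedSpace.exp ((Complex.I * (t : ℂ)) • H) * A)
        - Matrix.trace
            (NormedSpace.exp ((-(Complex.I * (t : ℂ))) • H) * B * ρ * B *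
              NormedSpace.exp ((Complex.I * (t : ℂ)) • H) * A) :=
  anticommutator_plus_representation_general ρ A B H t At hAt c hc0 ρplus hρplus
end

section
/- Let ρ, A, B, H be n×n complex matrices with B Hermitian and B·B = I, and let t be a real number. Set A(t) := exp(i·t·H)·A·exp(−i·t·H), c₋ := tr( ((I − B)/2) · ρ · ((I − B)/2) ), and assume c₋ ≠ 0. Define ρ₋ := c₋⁻¹ · exp(−i·t·H) · ((I − B)/2) · ρ · ((I − B)/2) · exp(i·t·H). Then tr(ρ·{A(t),B}) = −4·c₋·tr(ρ₋·A) + tr( exp(−i·t·H)·ρ·exp(i·t·H)·A ) + tr( exp(−i·t·H)·B·ρ·B·exp(i·t·H)·A ). -/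
/-! Expanding `(I - B) ρ (I - B)` and taking `4 c · c⁻¹ = 4` turns the right-hand side into
`tr(e^{-itH} (Bρ + ρB) e^{itH} A)`, which equals the left-hand side by cyclicity of the trace. -/

open Matrix Complex NormedSpace

namespace Matrix

variable {m R : Type*} [Fintype m]

theorem trace_mul_conj_add_conj_mul [CommRing R] (ρ A B E F : Matrix m m R) :
    trace (ρ * (E * A * F * B + B * (E * A * F))) = trace (F * (B * ρ + ρ * B) * E * A) := by
  have hBρ : trace (ρ * (E * A * F * B)) = trace (F * (B * ρ) * E * A) := by
    rw [show ρ * (E * A * F * B) = (ρ * (E * A)) * (F * B) by noncomm_ring, trace_mul_comm]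
    congr 1
    noncomm_ring
  have hρB : trace (ρ * (B * (E * A * F))) = trace (F * (ρ * B) * E * A) := by
    rw [show ρ * (B * (E * A * F)) = (ρ * (B * (E * A))) * F by noncomm_ring, trace_mul_comm]
    congr 1
    noncomm_ring
  rw [Matrix.mul_add, trace_add, hBρ, hρB, Matrix.mul_add, Matrix.add_mul, Matrix.add_mul,
    trace_add]

theorem smul_one_sub_mul_mul_smul_one_sub [DecidableEq m] [CommRing R] (a : R)
    (ρ B : Matrix m m R) :
    (a • (1 - B)) * ρ * (a • (1 - B)) = (a * a) • (ρ + B * ρ * B - (B * ρ + ρ * B)) := by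
  simp only [Matrix.smul_mul, Matrix.mul_smul, Matrix.sub_mul, Matrix.mul_sub, Matrix.one_mul,
    Matrix.mul_one]
  module

end Matrix

theorem anticommutator_minus_representation_general {n : ℕ}
    (ρ A B H : Matrix (Fin n) (Fin n) ℂ) (t : ℝ)
    (At : Matrix (Fin n) (Fin n) ℂ)
    (hAt : At = exp ((Complex.I * (t : ℂ)) • H) * A * exp ((-(Complex.I * (t : ℂ))) • H))
    (c : ℂ)
    (hc0 : c ≠ 0)
    (ρminus : Matrix (Fin n) (Fin n) ℂ)
    (hρminus : ρminus = c⁻¹ •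
        (exp ((-(Complex.I * (t : ℂ))) • H) *
          ((1 / 2 : ℂ) • ((1 : Matrix (Fin n) (Fin n) ℂ) - B)) * ρ *
          ((1 / 2 : ℂ) • ((1 : Matrix (Fin n) (Fin n) ℂ) - B)) *
          exp ((Complex.I * (t : ℂ)) • H))) :
    Matrix.trace (ρ * (At * B + B * At)) =
      -4 * c * Matrix.trace (ρminus * A)
        + Matrix.trace
            (exp ((-(Complex.I * (t : ℂ))) • H) * ρ * exp ((Complex.I * (t : ℂ)) • H) * A)
        + Matrix.trace
            (exp ((-(Complex.I * (t : ℂ))) • H) * B * ρ * B *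
              exp ((Complex.I * (t : ℂ)) • H) * A) := by
  subst hAt hρminus
  set E := exp ((Complex.I * (t : ℂ)) • H)
  set F := exp ((-(Complex.I * (t : ℂ))) • H)
  have hminus : (c⁻¹ • (F * ((1 / 2 : ℂ) • (1 - B)) * ρ * ((1 / 2 : ℂ) • (1 - B)) * E)) * A =
      (c⁻¹ * (1 / 2 * (1 / 2))) •
        (F * ρ * E * A + F * B * ρ * B * E * A - F * (B * ρ + ρ * B) * E * A) := by
    rw [Matrix.mul_assoc F, Matrix.mul_assoc F, smul_one_sub_mul_mul_smul_one_sub]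
    simp only [Matrix.smul_mul, Matrix.mul_smul, smul_smul, Matrix.add_mul, Matrix.sub_mul,
      Matrix.mul_add, Matrix.mul_sub, Matrix.mul_assoc]
  rw [trace_mul_conj_add_conj_mul, hminus, trace_smul, trace_sub, trace_add, smul_eq_mul]
  field_simp
  ring

/-- Minus representation of the anti-commutator correlation function with
uncontrolled time evolution: with c₋ = tr(((I−B)/2)·ρ·((I−B)/2)) ≠ 0 and
ρ₋ = c₋⁻¹ · e^{−iHt}·((I−B)/2)·ρ·((I−B)/2)·e^{iHt}, one has
tr(ρ·{A(t),B}) = −4·c₋·tr(ρ₋·A) + tr(e^{−iHt}·ρ·e^{iHt}·A) + tr(e^{−iHt}·B·ρ·B·e^{iHt}·A). -/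
theorem anticommutator_minus_representation {n : ℕ} (hn : 1 ≤ n)
    (ρ A B H : Matrix (Fin n) (Fin n) ℂ) (hB : Bᴴ = B) (hB2 : B * B = 1) (t : ℝ)
    (At : Matrix (Fin n) (Fin n) ℂ)
    (hAt : At = exp ((Complex.I * (t : ℂ)) • H) * A * exp ((-(Complex.I * (t : ℂ))) • H))
    (c : ℂ)
    (hc : c = Matrix.trace
        (((1 / 2 : ℂ) • ((1 : Matrix (Fin n) (Fin n) ℂ) - B)) * ρ *
          ((1 / 2 : ℂ) • ((1 : Matrix (Fin n) (Fin n) ℂ) - B))))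
    (hc0 : c ≠ 0)
    (ρminus : Matrix (Fin n) (Fin n) ℂ)
    (hρminus : ρminus = c⁻¹ •
        (exp ((-(Complex.I * (t : ℂ))) • H) *
          ((1 / 2 : ℂ) • ((1 : Matrix (Fin n) (Fin n) ℂ) - B)) * ρ *
          ((1 / 2 : ℂ) • ((1 : Matrix (Fin n) (Fin n) ℂ) - B)) *
          exp ((Complex.I * (t : ℂ)) • H))) :
    Matrix.trace (ρ * (At * B + B * At)) =
      -4 * c * Matrix.trace (ρminus * A)
        + Matrix.trace
            (exp ((-(Complex.I * (t : ℂ))) • H) * ρ * exp ((Complex.I * (t : ℂ)) • H) * A)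
        + Matrix.trace
            (exp ((-(Complex.I * (t : ℂ))) • H) * B * ρ * B *
              exp ((Complex.I * (t : ℂ)) • H) * A) :=
  anticommutator_minus_representation_general ρ A B H t At hAt c hc0 ρminus hρminus
end

section
/- Let P₀, P₁, …, P_{m−1} be n×n complex matrices that pairwise anticommute: Pᵢ·Pⱼ = −Pⱼ·Pᵢ whenever i ≠ j. Define Qᵢ := Pᵢ ⊗ P_{i+1} for 0 ≤ i ≤ m−2. Then the Qᵢ mutually commute: Qᵢ·Qⱼ = Qⱼ·Qᵢ for all 0 ≤ i, j ≤ m−2. -/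
open Matrix Kronecker

namespace Matrix

variable {α l m n p : Type*}

theorem neg_kronecker_neg [Mul α] [HasDistribNeg α] (A : Matrix l m α) (B : Matrix n p α) :
    (-A) ⊗ₖ (-B) = A ⊗ₖ B := by
  ext ⟨_, _⟩ ⟨_, _⟩
  simp only [kronecker_apply, neg_apply, neg_mul_neg]

/-- The two sign changes from swapping the factors cancel in the Kronecker product. -/
theorem commute_kronecker_of_anticommute [CommRing α] [Fintype m] [Fintype n]
    {A C : Matrix m m α} {B D : Matrix n n α} (hAC : A * C = -(C * A)) (hBD : B * D = -(D * B)) :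
    Commute (A ⊗ₖ B) (C ⊗ₖ D) := by
  rw [Commute, SemiconjBy, ← mul_kronecker_mul, ← mul_kronecker_mul, hAC, hBD,
    neg_kronecker_neg]

end Matrix

/-- For pairwise anticommuting matrices P₀,…,P_{m−1}, the chained
two-copy observables Qᵢ = Pᵢ ⊗ P_{i+1} mutually commute. -/
theorem chained_observables_commute {n m : ℕ}
    (P : Fin m → Matrix (Fin n) (Fin n) ℂ)
    (hanti : ∀ i j : Fin m, i ≠ j → P i * P j = -(P j * P i))
    (i j : ℕ) (hi : i + 1 < m) (hj : j + 1 < m) :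
    (P ⟨i, Nat.lt_of_succ_lt hi⟩ ⊗ₖ P ⟨i + 1, hi⟩) *
        (P ⟨j, Nat.lt_of_succ_lt hj⟩ ⊗ₖ P ⟨j + 1, hj⟩) =
      (P ⟨j, Nat.lt_of_succ_lt hj⟩ ⊗ₖ P ⟨j + 1, hj⟩) *
        (P ⟨i, Nat.lt_of_succ_lt hi⟩ ⊗ₖ P ⟨i + 1, hi⟩) := by
  rcases eq_or_ne i j with rfl | hij
  · rfl
  · refine commute_kronecker_of_anticommute (hanti _ _ ?_) (hanti _ _ ?_) <;>
      simpa [Fin.ext_iff] using hij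
end

section
/- Let P₀, …, P_{m−1} be n×n complex matrices that are Hermitian (Pᵢᴴ = Pᵢ), satisfy Pᵢ·Pᵢ = I, and pairwise anticommute (Pᵢ·Pⱼ = −Pⱼ·Pᵢ for i ≠ j). Let ρ be an n×n positive semidefinite Hermitian matrix with tr ρ = 1. Then ∑_{i<m} |tr(ρ·Pᵢ)|² ≤ 1. -/
/-!
The numbers tᵢ = tr(ρPᵢ) are real because ρ and Pᵢ are Hermitian. Put s = ∑ tᵢ² and
Q = ∑ tᵢPᵢ. Anticommutation kills the cross terms of Q², so Q² = s·I, while tr(ρQ) = s.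
The variance of the observable Q in the state ρ is nonnegative, tr(ρQ)² ≤ tr(ρQ²), which
reads s² ≤ s, hence s ≤ 1.
-/

open Matrix ComplexOrder

theorem Matrix.IsHermitian.star_trace_mul {n R : Type*} [Fintype n] [CommRing R] [StarRing R]
    {A B : Matrix n n R} (hA : A.IsHermitian) (hB : B.IsHermitian) :
    star (trace (A * B)) = trace (A * B) := by
  rw [← trace_conjTranspose, conjTranspose_mul, hA.eq, hB.eq, trace_mul_comm]

theorem sum_smul_mul_self_of_anticommute {ι R A : Type*} [CommSemiring R] [Ring A]
    [Algebra R A] {P : ι → A} (hsq : ∀ i, P i * P i = 1)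
    (hanti : ∀ i j, i ≠ j → P i * P j = -(P j * P i))
    (c : ι → R) (s : Finset ι) :
    (∑ i ∈ s, c i • P i) * (∑ i ∈ s, c i • P i) = (∑ i ∈ s, c i ^ 2) • (1 : A) := by
  classical
  induction s using Finset.induction_on with
  | empty => simp
  | insert a s ha ih =>
    have hcross :
        c a • P a * (∑ i ∈ s, c i • P i) + (∑ i ∈ s, c i • P i) * (c a • P a) = 0 := by
      rw [Finset.mul_sum, Finset.sum_mul, ← Finset.sum_add_distrib]
      refine Finset.sum_eq_zero fun i hi => ?_
      rw [smul_mul_smul_comm, smul_mul_smul_comm, hanti a i (ne_of_mem_of_not_mem hi ha).symm,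
        mul_comm (c i), smul_neg, neg_add_cancel]
    rw [Finset.sum_insert ha, Finset.sum_insert ha, add_smul, ← ih, add_mul, mul_add, mul_add,
      add_assoc, ← add_assoc (c a • P a * ∑ i ∈ s, c i • P i), hcross, zero_add,
      smul_mul_smul_comm, hsq, sq]

theorem Matrix.PosSemidef.trace_mul_conjTranspose_mul_self_nonneg {n 𝕜 : Type*} [Fintype n]
    [RCLike 𝕜] {ρ : Matrix n n 𝕜} (hρ : ρ.PosSemidef) (B : Matrix n n 𝕜) :
    0 ≤ trace (ρ * (Bᴴ * B)) := by
  rw [← Matrix.mul_assoc, trace_mul_comm, ← Matrix.mul_assoc]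
  exact (hρ.mul_mul_conjTranspose_same B).trace_nonneg

theorem Matrix.PosSemidef.sq_trace_mul_le_trace_mul_mul_self {n 𝕜 : Type*} [Fintype n]
    [DecidableEq n] [RCLike 𝕜] {ρ : Matrix n n 𝕜} (hρ : ρ.PosSemidef) (hρtr : trace ρ = 1)
    {Q : Matrix n n 𝕜} (hQ : Q.IsHermitian) : trace (ρ * Q) ^ 2 ≤ trace (ρ * (Q * Q)) := by
  set e := trace (ρ * Q)
  have he : star e = e := hρ.1.star_trace_mul hQ
  have hM : (Q - e • 1)ᴴ = Q - e • 1 := by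
    rw [conjTranspose_sub, conjTranspose_smul, he, hQ.eq, conjTranspose_one]
  -- tr(ρ (Q - e)ᴴ (Q - e)) = tr(ρQ²) - e², using that e is real and tr ρ = 1
  have hvar := hρ.trace_mul_conjTranspose_mul_self_nonneg (Q - e • 1)
  simp only [hM, sub_mul, mul_sub, Matrix.smul_mul, Matrix.mul_smul, Matrix.one_mul,
    Matrix.mul_one, trace_sub, trace_smul, hρtr, smul_eq_mul] at hvar
  rw [← sub_nonneg]
  convert hvar using 1
  ring

/-- For pairwise anticommuting Hermitian unitary observables P₀,…,P_{m−1}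
and a density matrix ρ, the squared expectation values satisfy ∑ᵢ |tr(ρ·Pᵢ)|² ≤ 1. -/
theorem anticommuting_expectations_bound {n m : ℕ}
    (P : Fin m → Matrix (Fin n) (Fin n) ℂ)
    (hHerm : ∀ i, (P i)ᴴ = P i)
    (hUnit : ∀ i, P i * P i = 1)
    (hanti : ∀ i j : Fin m, i ≠ j → P i * P j = -(P j * P i))
    (ρ : Matrix (Fin n) (Fin n) ℂ) (hρ : ρ.PosSemidef) (hρtr : Matrix.trace ρ = 1) :
    ∑ i, ‖Matrix.trace (ρ * P i)‖ ^ 2 ≤ 1 := by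
  set t : Fin m → ℝ := fun i => (trace (ρ * P i)).re
  have ht i : trace (ρ * P i) = t i :=
    (Complex.conj_eq_iff_re.mp (hρ.1.star_trace_mul (hHerm i))).symm
  set s := ∑ i, t i ^ 2
  set Q := ∑ i, (t i : ℂ) • P i
  have hQ : Q.IsHermitian := by
    simp only [IsHermitian, Q, conjTranspose_sum, conjTranspose_smul, hHerm, Complex.star_def,
      Complex.conj_ofReal]
  have hQQ : Q * Q = (s : ℂ) • 1 := by
    rw [sum_smul_mul_self_of_anticommute hUnit hanti]
    simp only [s, Complex.ofReal_sum, Complex.ofReal_pow]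
  have htrQ : trace (ρ * Q) = s := by
    simp only [Q, s, Finset.mul_sum, trace_sum, Matrix.mul_smul, trace_smul, ht]
    push_cast
    simp only [smul_eq_mul, sq]
  have hss : s ^ 2 ≤ s := by
    have := hρ.sq_trace_mul_le_trace_mul_mul_self hρtr hQ
    rwa [htrQ, hQQ, Matrix.mul_smul, Matrix.mul_one, trace_smul, hρtr, smul_eq_mul, mul_one,
      ← Complex.ofReal_pow, Complex.real_le_real] at this
  have hnorm : ∑ i, ‖trace (ρ * P i)‖ ^ 2 = s := by
    simp only [ht, Complex.norm_real, Real.norm_eq_abs, sq_abs, s]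
  nlinarith [hnorm, Finset.sum_nonneg fun i (_ : i ∈ Finset.univ) => sq_nonneg (t i)]
end
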